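/- Suppose q: D(G) → ℍ∖{0} satisfies Σ_{o(g)=u}|q(g)|² = 1 at every vertex u. Set a(e) = √2·q(e), b(e) = √2·q(e⁻¹). Then (1) K*K = L*L = 2·Iₙ, (2) J₀ K L* = L L*, and (3) L* J₀ L = W̃, where W̃_{uv} = 2 q((u,v))* q((v,u)) if (v,u) ∈ D(G) and 0 otherwise. -/

import Mathlib

open Quaternion Matrix Finset

noncomputable section

/-- Simplex part of a quaternion: `x = S(x) + j·P(x)`. -/
def qS (x : Quaternion ℝ) : ℂ := ⟨x.re, x.imI⟩

/-- Perplex part of a quaternion. -/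
def qP (x : Quaternion ℝ) : ℂ := ⟨x.imJ, -x.imK⟩

/-- Embedding of `ℂ` into the quaternions (span of `1, i`). -/
def cq (z : ℂ) : Quaternion ℝ := ⟨z.re, z.im, 0, 0⟩

/-- The quaternion unit `j`. -/
def jq : Quaternion ℝ := ⟨0, 0, 1, 0⟩

/-- The standard complex representation of a quaternionic matrix `M = A + jB`,
`ψ(M) = [[A, -conj B],[B, conj A]]`. -/
def psi {m n : Type*} (M : Matrix m n (Quaternion ℝ)) :
    Matrix (m ⊕ m) (n ⊕ n) ℂ :=
  Matrix.fromBlocks (M.map qS) (-(M.map fun x => star (qP x)))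
    (M.map qP) (M.map fun x => star (qS x))

variable {V : Type*}

/-- Arc-by-vertex matrix `K` with `K_{ev} = a(e)` if `o(e) = v`. Arcs are the
elements of a symmetric finite set `E` of ordered pairs of vertices. -/
def Karc [DecidableEq V] (E : Finset (V × V)) (a : V × V → Quaternion ℝ) :
    Matrix ↥E V (Quaternion ℝ) :=
  Matrix.of fun e v => if e.1.1 = v then a e.1 else 0

/-- Arc-by-vertex matrix `L` with `L_{ev} = b(e)` if `t(e) = v`. -/
def Larc [DecidableEq V] (E : Finset (V × V)) (b : V × V → Quaternion ℝ) :
    Matrix ↥E V (Quaternion ℝ) :=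
  Matrix.of fun e v => if e.1.2 = v then b e.1 else 0

/-- The arc-inversion matrix `J₀` with `(J₀)_{ef} = 1` iff `f = e⁻¹`. -/
def J0 [DecidableEq V] (E : Finset (V × V)) : Matrix ↥E ↥E (Quaternion ℝ) :=
  Matrix.of fun e f => if f.1 = Prod.swap e.1 then 1 else 0

/-- Transition matrix of the quaternionic Szegedy walk. -/
def SzeU [DecidableEq V] (E : Finset (V × V)) (q : V × V → Quaternion ℝ) :
    Matrix ↥E ↥E (Quaternion ℝ) :=
  Matrix.of fun e f =>
    if f.1 = Prod.swap e.1 then 2 * (q e.1 * star (q e.1)) - 1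
    else if f.1.2 = e.1.1 then 2 * (q e.1 * star (q (Prod.swap f.1))) else 0

/-- The doubly weighted matrix `W̃` for general arc weights `a, b`. -/
def Wt [DecidableEq V] (E : Finset (V × V)) (a b : V × V → Quaternion ℝ) :
    Matrix V V (Quaternion ℝ) :=
  Matrix.of fun u v => if (v, u) ∈ E then star (b (v, u)) * a (v, u) else 0

/-- The diagonal matrix `D̃` with `D̃_{uu} = Σ_{o(e)=u} b(e⁻¹)* a(e)`. -/
def Dt [DecidableEq V] (E : Finset (V × V)) (a b : V × V → Quaternion ℝ) :
    Matrix V V (Quaternion ℝ) :=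
  Matrix.of fun u v =>
    if u = v then ∑ e ∈ E.filter (fun p => p.1 = u), star (b (Prod.swap e)) * a e else 0

/-- The doubly weighted matrix of the quaternionic Szegedy walk. -/
def Wtil [DecidableEq V] (E : Finset (V × V)) (q : V × V → Quaternion ℝ) :
    Matrix V V (Quaternion ℝ) :=
  Matrix.of fun u v => if (v, u) ∈ E then 2 * (star (q (u, v)) * q (v, u)) else 0

/-- The number of loops of the graph. -/
def nLoops [DecidableEq V] (E : Finset (V × V)) : ℕ :=
  (E.filter fun p => p.1 = p.2).card


/-!
Reversing arcs is a permutation of the arc set and `J₀` is its permutation matrix, so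
`J₀ᴴ J₀ = 1`; moreover `J₀ K_a = L_{a ∘ swap}`. As `b = a ∘ swap`, this gives `L = J₀ K`, whence
`Lᴴ L = Kᴴ K`, `J₀ K Lᴴ = L Lᴴ` and `Lᴴ J₀ L = Kᴴ J₀ᴴ J₀ J₀ K = Kᴴ L`. Entrywise, `Kᴴ K` is
diagonal with entries `Σ_{o(e)=u} |a(e)|² = 2`, and `(Kᴴ L)_{uv}` only involves the arc `(u, v)`.
-/

lemma star_sqrt_two_mul_mul_sqrt_two_mul (x y : Quaternion ℝ) :
    star ((√2 : ℝ) * x : Quaternion ℝ) * ((√2 : ℝ) * y) = 2 * (star x * y) := by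
  rw [star_mul, star_coe, mul_assoc, ← mul_assoc (√2 : ℍ), ← Quaternion.coe_mul,
    Real.mul_self_sqrt zero_le_two, ← mul_assoc, ← coe_commutes, mul_assoc]
  norm_cast

section ArcMatrices

variable (E : Finset (V × V))

def arcReverse (hsym : ∀ p ∈ E, Prod.swap p ∈ E) : Equiv.Perm ↥E :=
  Function.Involutive.toPerm (fun e => ⟨e.1.swap, hsym e.1 e.2⟩)
    fun e => Subtype.ext e.1.swap_swap

@[simp]
lemma coe_arcReverse_apply (hsym : ∀ p ∈ E, Prod.swap p ∈ E) (e : ↥E) :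
    (arcReverse E hsym e : V × V) = e.1.swap :=
  rfl

variable [DecidableEq V]

lemma J0_eq_permMatrix (hsym : ∀ p ∈ E, Prod.swap p ∈ E) :
    J0 E = (arcReverse E hsym).permMatrix (Quaternion ℝ) := by
  refine Matrix.ext fun e f => ?_
  simp only [J0, of_apply, PEquiv.toMatrix_apply, Equiv.toPEquiv_apply, Option.mem_some_iff,
    Subtype.ext_iff, coe_arcReverse_apply]
  exact if_congr eq_comm rfl rfl

lemma conjTranspose_J0_mul_J0 (hsym : ∀ p ∈ E, Prod.swap p ∈ E) : (J0 E)ᴴ * J0 E = 1 := by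
  rw [J0_eq_permMatrix E hsym, conjTranspose_permMatrix, ← permMatrix_mul, mul_inv_cancel,
    permMatrix_one]

lemma J0_mul_Karc (hsym : ∀ p ∈ E, Prod.swap p ∈ E) (a : V × V → Quaternion ℝ) :
    J0 E * Karc E a = Larc E (a ∘ Prod.swap) := by
  rw [J0_eq_permMatrix E hsym, PEquiv.toMatrix_toPEquiv_mul]
  rfl

lemma conjTranspose_Karc_mul_Karc (a c : V × V → Quaternion ℝ) :
    (Karc E a)ᴴ * Karc E c =
      diagonal fun u => ∑ e ∈ E.filter (fun p => p.1 = u), star (a e) * c e := by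
  refine Matrix.ext fun u v => ?_
  rw [mul_apply, diagonal_apply, Finset.sum_filter, ← Finset.sum_coe_sort E]
  split_ifs with huv
  · subst huv
    refine Finset.sum_congr rfl fun e _ => ?_
    by_cases h : e.1.1 = u <;> simp [Karc, h]
  · refine Finset.sum_eq_zero fun e _ => ?_
    by_cases h : e.1.1 = u <;> simp [Karc, h, huv]

lemma conjTranspose_Karc_mul_Larc (a c : V × V → Quaternion ℝ) :
    (Karc E a)ᴴ * Larc E c =
      of fun u v => if (u, v) ∈ E then star (a (u, v)) * c (u, v) else 0 := by
  refine Matrix.ext fun u v => ?_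
  rw [mul_apply, of_apply, ← Finset.sum_ite_eq' E (u, v) fun p => star (a p) * c p,
    ← Finset.sum_coe_sort E]
  refine Finset.sum_congr rfl fun e _ => ?_
  by_cases h₁ : e.1.1 = u <;> by_cases h₂ : e.1.2 = v <;> simp [Karc, Larc, Prod.ext_iff, h₁, h₂]

lemma conjTranspose_Karc_mul_Karc_of_sum_normSq (q : V × V → Quaternion ℝ)
    (hu : ∀ u : V, ∑ e ∈ E.filter (fun p => p.1 = u), Quaternion.normSq (q e) = 1) :
    (Karc E fun p => (√2 : ℝ) * q p)ᴴ * Karc E (fun p => (√2 : ℝ) * q p) = 2 := by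
  rw [conjTranspose_Karc_mul_Karc, ← diagonal_ofNat]
  congr 1
  funext u
  simp_rw [star_sqrt_two_mul_mul_sqrt_two_mul, star_mul_self]
  rw [← mul_sum, ← algebraMap_def, ← map_sum, hu u, map_one, mul_one]

lemma conjTranspose_Karc_mul_Larc_eq_Wtil (hsym : ∀ p ∈ E, Prod.swap p ∈ E)
    (q : V × V → Quaternion ℝ) :
    (Karc E fun p => (√2 : ℝ) * q p)ᴴ * Larc E (fun p => (√2 : ℝ) * q p.swap) = Wtil E q := by
  rw [conjTranspose_Karc_mul_Larc]
  refine Matrix.ext fun u v => ?_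
  simp only [of_apply, Wtil, Prod.swap_prod_mk, star_sqrt_two_mul_mul_sqrt_two_mul]
  exact if_congr ⟨hsym (u, v), hsym (v, u)⟩ rfl rfl

end ArcMatrices

theorem szegedy_KLJ_identities_general [Fintype V] [DecidableEq V] (E : Finset (V × V))
    (hsym : ∀ p ∈ E, Prod.swap p ∈ E)
    (q : V × V → Quaternion ℝ)
    (hu : ∀ u : V, ∑ e ∈ E.filter (fun p => p.1 = u), Quaternion.normSq (q e) = 1)
    (a b : V × V → Quaternion ℝ)
    (ha : a = fun p => ((Real.sqrt 2 : ℝ) : Quaternion ℝ) * q p)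
    (hb : b = fun p => ((Real.sqrt 2 : ℝ) : Quaternion ℝ) * q (Prod.swap p)) :
    ((Karc E a)ᴴ * Karc E a = 2 ∧ (Larc E b)ᴴ * Larc E b = 2) ∧
      J0 E * (Karc E a * (Larc E b)ᴴ) = Larc E b * (Larc E b)ᴴ ∧
      (Larc E b)ᴴ * J0 E * Larc E b = Wtil E q := by
  subst ha hb
  have hJ := conjTranspose_J0_mul_J0 E hsym
  have hK := conjTranspose_Karc_mul_Karc_of_sum_normSq E q hu
  have hL : Larc E (fun p => (√2 : ℝ) * q p.swap) = J0 E * Karc E (fun p => (√2 : ℝ) * q p) :=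
    (J0_mul_Karc E hsym fun p => (√2 : ℝ) * q p).symm
  rw [hL]
  refine ⟨⟨hK, ?_⟩, (Matrix.mul_assoc _ _ _).symm, ?_⟩
  · rw [conjTranspose_mul, Matrix.mul_assoc, ← Matrix.mul_assoc (J0 E)ᴴ, hJ, Matrix.one_mul, hK]
  · rw [conjTranspose_mul, Matrix.mul_assoc, Matrix.mul_assoc, ← Matrix.mul_assoc (J0 E)ᴴ, hJ,
      Matrix.one_mul, ← hL]
    exact conjTranspose_Karc_mul_Larc_eq_Wtil E hsym q

theorem szegedy_KLJ_identities [Fintype V] [DecidableEq V] (E : Finset (V × V))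
    (hsym : ∀ p ∈ E, Prod.swap p ∈ E)
    (hconn : ∀ u v : V, Relation.ReflTransGen (fun x y => (x, y) ∈ E) u v)
    (q : V × V → Quaternion ℝ) (hq : ∀ p ∈ E, q p ≠ 0)
    (hu : ∀ u : V, ∑ e ∈ E.filter (fun p => p.1 = u), Quaternion.normSq (q e) = 1)
    (a b : V × V → Quaternion ℝ)
    (ha : a = fun p => ((Real.sqrt 2 : ℝ) : Quaternion ℝ) * q p)
    (hb : b = fun p => ((Real.sqrt 2 : ℝ) : Quaternion ℝ) * q (Prod.swap p)) :
    ((Karc E a)ᴴ * Karc E a = 2 ∧ (Larc E b)ᴴ * Larc E b = 2) ∧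
      J0 E * (Karc E a * (Larc E b)ᴴ) = Larc E b * (Larc E b)ᴴ ∧
      (Larc E b)ᴴ * J0 E * Larc E b = Wtil E q :=
  szegedy_KLJ_identities_general E hsym q hu a b ha hb
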